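/- Let Δ be an α-saturated set of vD-formulas (with respect to the vD consequence relation ⊢), for some vD-formula α. Then for all vD-formulas β and γ: β → γ ∈ Δ if and only if either β ∉ Δ or γ ∈ Δ. -/
import Mathlib


/-- Formulas of the logic vD. -/
inductive VForm : Type
  | var : ℕ → VForm
  | conj : VForm → VForm → VForm
  | disj : VForm → VForm → VForm
  | imp : VForm → VForm → VForm
  | neg : VForm → VForm
  | circ : VForm → VForm

/-- The bottom formula ⊥ := β₀ ∧ (¬β₀ ∧ ∘β₀), for the fixed formula `b = β₀`. -/
def vBot (b : VForm) : VForm := .conj b (.conj (.neg b) (.circ b))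

/-- The defined classical negation ~α := α → ⊥. -/
def vNot (b : VForm) (a : VForm) : VForm := .imp a (vBot b)

/-- Axiom schemas (1)–(18) of the Hilbert system for vD. -/
inductive VAx (b : VForm) : VForm → Prop
  | a1 (α β : VForm) : VAx b (.imp α (.imp β α))
  | a2 (α β γ : VForm) :
      VAx b (.imp (.imp α (.imp β γ)) (.imp (.imp α β) (.imp α γ)))
  | a3 (α β : VForm) : VAx b (.imp α (.imp β (.conj α β)))
  | a4 (α β : VForm) : VAx b (.imp (.conj α β) α)
  | a5 (α β : VForm) : VAx b (.imp (.conj α β) β)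
  | a6 (α β : VForm) : VAx b (.imp α (.disj α β))
  | a7 (α β : VForm) : VAx b (.imp β (.disj α β))
  | a8 (α β : VForm) : VAx b (.disj (.imp α β) α)
  | a9 (α : VForm) : VAx b (.disj α (.neg α))
  | a10 (α γ : VForm) :
      VAx b (.imp (.imp α γ) (.imp (.imp (.neg α) γ) (.imp (.disj α (.neg α)) γ)))
  | a11 (α β γ : VForm) :
      VAx b (.imp (.imp (.imp α β) γ)
        (.imp (.imp α γ) (.imp (.disj (.imp α β) α) γ)))
  | a12 (α β : VForm) : VAx b (.imp (.circ α) (.imp α (.imp (.neg α) β)))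
  | a13 (α : VForm) : VAx b (.disj (.circ α) (.conj α (.neg α)))
  | a14 (α γ : VForm) :
      VAx b (.imp (.imp (.circ α) γ)
        (.imp (.imp (.conj α (.neg α)) γ)
          (.imp (.disj (.circ α) (.conj α (.neg α))) γ)))
  | a15 (α : VForm) :
      VAx b (.imp (vNot b (.neg α)) (vNot b (.neg (vNot b (.neg α)))))
  | a16 (α : VForm) :
      VAx b (.imp (vNot b (.neg (vNot b (.neg α)))) (vNot b (.neg α)))
  | a17 (α β : VForm) :
      VAx b (.imp (vNot b (.neg (.conj α β))) (.conj (vNot b (.neg α)) (vNot b (.neg β))))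
  | a18 (α β : VForm) :
      VAx b (.imp (.conj (vNot b (.neg α)) (vNot b (.neg β))) (vNot b (.neg (.conj α β))))

/-- Derivability in the Hilbert system for vD: axiom instances, hypotheses, modus
ponens, and the restricted rule (applied only to theorems, i.e. formulas derivable
from the empty set). -/
inductive VDer (b : VForm) : Set VForm → VForm → Prop
  | ax {Γ : Set VForm} {φ : VForm} : VAx b φ → VDer b Γ φ
  | hyp {Γ : Set VForm} {φ : VForm} : φ ∈ Γ → VDer b Γ φ
  | mp {Γ : Set VForm} {φ ψ : VForm} :
      VDer b Γ φ → VDer b Γ (.imp φ ψ) → VDer b Γ ψ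
  | negThm {Γ : Set VForm} {φ : VForm} :
      VDer b ∅ φ → VDer b Γ (.imp (.neg φ) (vNot b φ))

/-- Δ is α-saturated with respect to the vD consequence relation. -/
def VSaturated (b : VForm) (Δ : Set VForm) (α : VForm) : Prop :=
  ¬ VDer b Δ α ∧ ∀ β ∉ Δ, VDer b (Δ ∪ {β}) α


lemma vder_id (b : VForm) (Γ : Set VForm) (φ : VForm) : VDer b Γ (.imp φ φ) :=
  .mp (.ax (.a1 φ φ)) (.mp (.ax (.a1 φ (.imp φ φ))) (.ax (.a2 φ (.imp φ φ) φ)))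

lemma vder_ded {b : VForm} {Γ : Set VForm} {ψ φ : VForm}
    (h : VDer b (Γ ∪ {ψ}) φ) : VDer b Γ (.imp ψ φ) := by
  generalize hS : Γ ∪ {ψ} = S at h
  induction h with
  | @ax _ χ hx => exact .mp (.ax hx) (.ax (.a1 χ ψ))
  | @hyp _ χ hm =>
    subst hS
    rcases hm with hm | hm
    · exact .mp (.hyp hm) (.ax (.a1 χ ψ))
    · rw [Set.mem_singleton_iff] at hm; rw [hm]; exact vder_id b Γ ψ
  | @mp _ χ χ' _ _ ih1 ih2 =>
    exact .mp (ih1 hS) (.mp (ih2 hS) (.ax (.a2 ψ χ χ')))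
  | @negThm _ χ hd =>
    exact .mp (.negThm hd) (.ax (.a1 _ ψ))

lemma vsat_closed {b : VForm} {Δ : Set VForm} {α φ : VForm}
    (h : VSaturated b Δ α) (hd : VDer b Δ φ) : φ ∈ Δ := by
  by_contra hn
  exact h.1 (.mp hd (vder_ded (h.2 φ hn)))

/-- In an α-saturated set Δ, β → γ ∈ Δ iff β ∉ Δ or γ ∈ Δ. -/
theorem vD_saturated_imp (b : VForm) (Δ : Set VForm) (α : VForm)
    (h : VSaturated b Δ α) :
    ∀ β γ : VForm, VForm.imp β γ ∈ Δ ↔ (β ∉ Δ ∨ γ ∈ Δ) := by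
  intro β γ
  constructor
  · intro hβγ
    by_cases hβ : β ∈ Δ
    · exact Or.inr (vsat_closed h (.mp (.hyp hβ) (.hyp hβγ)))
    · exact Or.inl hβ
  · rintro (hβ | hγ)
    · by_contra hn
      have h1 : VDer b Δ (.imp (.imp β γ) α) := vder_ded (h.2 _ hn)
      have h2 : VDer b Δ (.imp β α) := vder_ded (h.2 β hβ)
      exact h.1 (.mp (.ax (.a8 β γ)) (.mp h2 (.mp h1 (.ax (.a11 β γ α)))))
    · exact vsat_closed h (.mp (.hyp hγ) (.ax (.a1 γ β)))
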